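/- arXiv:1409.3961 — 4 statements merged into one kernel-verified Lean document; each statement's English description precedes it below -/
import Mathlib

section
/- Let (X, 𝒜, μ) be a σ-finite measure space, A : X → X a nonsingular measurable transformation, and h_A = d(μ∘A⁻¹)/dμ. The composition operator C_A is densely defined in L²(μ) if and only if h_A < ∞ μ-almost everywhere. -/
/-!
By change of variables, `f ∘ A ∈ Lᵖ(μ)` iff `f ∈ Lᵖ(h ν)`. If `h < ∞` a.e., the truncations
`f · 1_{h ≤ n}` lie in the domain and converge to `f`, since `‖f · 1_{h > n}‖ₚ → 0` by continuity
from above of the finite measure `‖f‖ᵖ ν`. Conversely, on `{h = ∞}` the measure `h ν` is `∞ • ν`,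
so every `f` in the domain vanishes a.e. there; this says that `f` lies in the kernel of the
restriction map to `{h = ∞}`, a closed subspace. Density puts all of `Lᵖ(ν)` into that kernel,
and σ-finiteness provides an indicator function witnessing `ν {h = ∞} = 0`.
-/

open MeasureTheory Filter Topology

open scoped ENNReal

namespace MeasureTheory

variable {X Y E : Type*} [MeasurableSpace X] [MeasurableSpace Y] [NormedAddCommGroup E]
  {μ : Measure X} {ν : Measure Y} {p : ℝ≥0∞} {h : Y → ℝ≥0∞}

theorem memLp_comp_iff_memLp_withDensity {A : X → Y} (hA : AEMeasurable A μ)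
    (hd : μ.map A = ν.withDensity h) {f : Y → E} (hf : AEStronglyMeasurable f ν) :
    MemLp (fun x => f (A x)) p μ ↔ MemLp f p (ν.withDensity h) := by
  rw [← hd]
  exact (memLp_map_measure_iff (hf.mono_ac (hd ▸ withDensity_absolutelyContinuous ν h)) hA).symm

theorem restrict_withDensity_setOf_eq_top (hh : Measurable h) :
    (ν.withDensity h).restrict {y | h y = ∞} = ∞ • ν.restrict {y | h y = ∞} := by
  have hS : MeasurableSet {y | h y = ∞} := hh (measurableSet_singleton ∞)
  rw [restrict_withDensity hS, ← withDensity_const]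
  exact withDensity_congr_ae (ae_restrict_mem hS)

theorem ae_restrict_eq_zero_of_memLp_withDensity (hp0 : p ≠ 0) (hp : p ≠ ∞)
    (hh : Measurable h) {f : Y → E} (hf : MemLp f p (ν.withDensity h)) :
    f =ᵐ[ν.restrict {y | h y = ∞}] 0 := by
  have hf' := hf.restrict {y | h y = ∞}
  rw [restrict_withDensity_setOf_eq_top hh] at hf'
  have hpos : 0 < (1 / p).toReal := ENNReal.toReal_pos (by simpa using hp) (by simpa using hp0)
  have hnorm : eLpNorm f p (ν.restrict {y | h y = ∞}) = 0 := by
    have := hf'.eLpNorm_lt_top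
    rw [eLpNorm_smul_measure_of_ne_zero ENNReal.top_ne_zero, ENNReal.top_rpow_of_pos hpos,
      smul_eq_mul] at this
    simpa [ENNReal.mul_lt_top_iff] using this
  exact (eLpNorm_eq_zero_iff (hf'.aestronglyMeasurable.mono_ac
    (Measure.absolutelyContinuous_smul ENNReal.top_ne_zero)) hp0).1 hnorm

theorem measure_eq_zero_of_forall_Lp_ae_restrict_eq_zero [SigmaFinite ν] [Nontrivial E]
    {S : Set Y} (hS : MeasurableSet S) (h0 : ∀ f : Lp E p ν, f =ᵐ[ν.restrict S] 0) :
    ν S = 0 := by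
  by_contra hne
  obtain ⟨T, hT, hTS, hTpos, hTfin⟩ :=
    Measure.exists_subset_measure_lt_top hS (pos_iff_ne_zero.2 hne)
  obtain ⟨c, hc⟩ := exists_ne (0 : E)
  have hzero := (ae_restrict_iff' hT).1 <|
    ae_restrict_of_ae_restrict_of_subset hTS (h0 (indicatorConstLp p hT hTfin.ne c))
  refine hTpos.ne' (measure_eq_zero_iff_ae_notMem.2 ?_)
  filter_upwards [hzero, indicatorConstLp_coeFn (p := p) (hs := hT) (hμs := hTfin.ne) (c := c)]
    with x hx0 hxc hxT
  rw [hxc, Set.indicator_of_mem hxT] at hx0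
  exact hc (hx0 hxT)

theorem ae_lt_top_of_dense_memLp_comp [NormedSpace ℝ E] [Nontrivial E] [Fact (1 ≤ p)]
    [SigmaFinite ν] (hp : p ≠ ∞) {A : X → Y} (hA : AEMeasurable A μ) (hh : Measurable h)
    (hd : μ.map A = ν.withDensity h)
    (hdense : Dense {f : Lp E p ν | MemLp (fun x => f (A x)) p μ}) :
    ∀ᵐ y ∂ν, h y < ∞ := by
  set S := {y | h y = ∞}
  have hS : MeasurableSet S := hh (measurableSet_singleton ∞)
  set R := LpToLpRestrictCLM Y E ℝ ν p S
  have hR_dom : Set.EqOn R 0 {f : Lp E p ν | MemLp (fun x => f (A x)) p μ} := by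
    intro f hf
    rw [Set.mem_ofPred_eq, memLp_comp_iff_memLp_withDensity hA hd (Lp.aestronglyMeasurable f)]
      at hf
    rw [Pi.zero_apply, Lp.eq_zero_iff_ae_eq_zero]
    exact (LpToLpRestrictCLM_coeFn ℝ S f).trans
      (ae_restrict_eq_zero_of_memLp_withDensity (zero_lt_one.trans_le Fact.out).ne' hp hh hf)
  have hR : ⇑R = 0 := Continuous.ext_on hdense R.continuous continuous_zero hR_dom
  have hnull : ν S = 0 := measure_eq_zero_of_forall_Lp_ae_restrict_eq_zero hS fun f =>
    (LpToLpRestrictCLM_coeFn ℝ S f).symm.trans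
      (Lp.eq_zero_iff_ae_eq_zero.1 (congrFun hR f))
  filter_upwards [measure_eq_zero_iff_ae_notMem.1 hnull] with y hy
  exact lt_top_iff_ne_top.2 hy

theorem MemLp.tendsto_eLpNorm_restrict_zero {f : X → E} (hf : MemLp f p μ) (hp : p ≠ ∞)
    {t : ℕ → Set X} (ht : ∀ n, MeasurableSet (t n)) (hanti : Antitone t)
    (hnull : μ (⋂ n, t n) = 0) :
    Tendsto (fun n => eLpNorm f p (μ.restrict (t n))) atTop (𝓝 0) := by
  rcases eq_or_ne p 0 with rfl | hp0
  · simp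
  set ρ := μ.withDensity fun x => ‖f x‖ₑ ^ p.toReal
  have hρ : ∀ n, eLpNorm f p (μ.restrict (t n)) = ρ (t n) ^ (1 / p.toReal) := fun n => by
    rw [eLpNorm_eq_lintegral_rpow_enorm_toReal hp0 hp, withDensity_apply _ (ht n)]
  have hρ_fin : ρ (t 0) ≠ ∞ := by
    rw [withDensity_apply _ (ht 0)]
    exact (setLIntegral_le_lintegral _ _).trans_lt
      (lintegral_rpow_enorm_lt_top_of_eLpNorm_lt_top hp0 hp hf.eLpNorm_lt_top) |>.ne
  have hρ_tendsto : Tendsto (fun n => ρ (t n)) atTop (𝓝 0) := by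
    have := tendsto_measure_iInter_atTop (fun n => (ht n).nullMeasurableSet) hanti ⟨0, hρ_fin⟩
    rwa [withDensity_apply _ (MeasurableSet.iInter ht), Measure.restrict_eq_zero.2 hnull,
      lintegral_zero_measure] at this
  have hexp : 0 < 1 / p.toReal := one_div_pos.2 (ENNReal.toReal_pos hp0 hp)
  simp_rw [hρ]
  have := (ENNReal.continuous_rpow_const (y := 1 / p.toReal) |>.tendsto 0).comp hρ_tendsto
  rwa [ENNReal.zero_rpow_of_pos hexp] at this

theorem Lp.tendsto_indicator_toLp [Fact (1 ≤ p)] (hp : p ≠ ∞) (f : Lp E p μ) {s : ℕ → Set X}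
    (hs : ∀ n, MeasurableSet (s n)) (hmono : Monotone s) (hcover : ∀ᵐ x ∂μ, ∃ n, x ∈ s n) :
    Tendsto (fun n => ((Lp.memLp f).indicator (hs n)).toLp ((s n).indicator f)) atTop (𝓝 f) := by
  conv_rhs => rw [← Lp.toLp_coeFn f (Lp.memLp f)]
  rw [Lp.tendsto_Lp_iff_tendsto_eLpNorm'']
  have hcompl : ∀ n, eLpNorm ((s n).indicator f - ⇑f) p μ = eLpNorm f p (μ.restrict (s n)ᶜ) :=
    fun n => by
      rw [← eLpNorm_neg, neg_sub, ← Set.indicator_compl,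
        eLpNorm_indicator_eq_eLpNorm_restrict (hs n).compl]
  simp_rw [hcompl]
  refine (Lp.memLp f).tendsto_eLpNorm_restrict_zero hp (fun n => (hs n).compl)
    (fun n m hnm => Set.compl_subset_compl.2 (hmono hnm)) ?_
  rw [← Set.compl_iUnion, measure_eq_zero_iff_ae_notMem]
  simpa using hcover

theorem MemLp.indicator_withDensity_of_le {f : Y → E} (hf : MemLp f p ν) {s : Set Y}
    (hs : MeasurableSet s) {c : ℝ≥0∞} (hc : c ≠ ∞) (hle : ∀ y ∈ s, h y ≤ c) :
    MemLp (s.indicator f) p (ν.withDensity h) := by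
  rw [memLp_indicator_iff_restrict hs, restrict_withDensity hs]
  refine (hf.restrict s |>.smul_measure hc).mono_measure ?_
  rw [← withDensity_const]
  exact withDensity_mono ((ae_restrict_iff' hs).2 (Eventually.of_forall hle))

theorem dense_memLp_comp_of_ae_lt_top [Fact (1 ≤ p)] (hp : p ≠ ∞) {A : X → Y}
    (hA : AEMeasurable A μ) (hh : Measurable h) (hd : μ.map A = ν.withDensity h)
    (hfin : ∀ᵐ y ∂ν, h y < ∞) :
    Dense {f : Lp E p ν | MemLp (fun x => f (A x)) p μ} := by
  intro f
  set s : ℕ → Set Y := fun n => {y | h y ≤ n}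
  have hs : ∀ n, MeasurableSet (s n) := fun n => hh measurableSet_Iic
  have hmono : Monotone s := fun n m hnm y (hy : h y ≤ n) =>
    show h y ≤ m from hy.trans (Nat.cast_le.2 hnm)
  have hcover : ∀ᵐ y ∂ν, ∃ n, y ∈ s n := by
    filter_upwards [hfin] with y hy
    exact (ENNReal.exists_nat_gt hy.ne).imp fun n hn => hn.le
  refine mem_closure_of_tendsto (Lp.tendsto_indicator_toLp hp f hs hmono hcover)
    (Eventually.of_forall fun n => ?_)
  rw [Set.mem_ofPred_eq, memLp_comp_iff_memLp_withDensity hA hd (Lp.aestronglyMeasurable _)]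
  refine ((Lp.memLp f).indicator_withDensity_of_le (hs n) (ENNReal.natCast_ne_top n)
    fun y hy => hy).ae_eq ?_
  exact (withDensity_absolutelyContinuous ν h).ae_le (MemLp.coeFn_toLp _).symm

end MeasureTheory

/-- Let `(X, 𝒜, μ)` be σ-finite, `A : X → X` a nonsingular measurable
transformation and `h = d(μ∘A⁻¹)/dμ` (i.e. `μ.map A = μ.withDensity h`). The composition
operator `C_A` is densely defined in `L²(μ)` (its domain `{f ∈ L²(μ) : f ∘ A ∈ L²(μ)}` is
dense) if and only if `h < ∞` a.e. `[μ]`. -/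
theorem stmt_2 {X : Type*} [MeasurableSpace X] (μ : Measure X) [SigmaFinite μ]
    (A : X → X) (hA : Measurable A)
    (h : X → ℝ≥0∞) (hh : Measurable h) (hd : μ.map A = μ.withDensity h) :
    Dense {f : Lp ℂ 2 μ | MemLp (fun x => f (A x)) 2 μ} ↔ ∀ᵐ x ∂μ, h x < ∞ :=
  ⟨ae_lt_top_of_dense_memLp_comp ENNReal.ofNat_ne_top hA.aemeasurable hh hd,
    dense_memLp_comp_of_ae_lt_top ENNReal.ofNat_ne_top hA.aemeasurable hh hd⟩
end

section
/- Let μₙ be the standard Gaussian measure on ℝⁿ and A an invertible linear transformation of ℝⁿ with operator norm ‖A‖ ≤ 1. Then the composition operator C_A f = f ∘ A is bounded on L²(μₙ) with ‖C_A‖² = |det A|⁻¹. -/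
open MeasureTheory

open scoped ENNReal

/-- The standard `n`-dimensional Gaussian measure `dμₙ = (2π)^{-n/2} exp(-‖x‖²/2) dλₙ`. -/
noncomputable def gaussianMeasure (n : ℕ) : Measure (EuclideanSpace ℝ (Fin n)) :=
  volume.withDensity fun x =>
    ENNReal.ofReal ((2 * Real.pi) ^ (-(n : ℝ) / 2) * Real.exp (-‖x‖ ^ 2 / 2))

/-! The Gaussian density is a decreasing function of `‖x‖` and `‖A⁻¹ y‖ ≥ ‖y‖`, so the
change of variables `y = A x` shows that the push-forward of `μₙ` under `A` is at most
`|det A|⁻¹ μₙ`; for composition operators such a domination of the push-forward is equivalent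
to the `L²` bound with constant `|det A|^{-1/2}`. Conversely, on small balls `B` around the
origin the density is almost constant, so `μₙ(B) / μₙ(A B)` tends to `|det A|⁻¹`, and testing
on the indicator of `A B` shows that no smaller constant works. -/

open Set Filter Topology

theorem MeasurableEquiv.map_withDensity {α β : Type*} [MeasurableSpace α] [MeasurableSpace β]
    (e : α ≃ᵐ β) (μ : Measure α) (f : α → ℝ≥0∞) :
    (μ.withDensity f).map e = (μ.map e).withDensity (f ∘ e.symm) := by
  ext s hs
  rw [e.map_apply, withDensity_apply _ (e.measurable hs), withDensity_apply _ hs,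
    e.restrict_map, lintegral_map_equiv]
  simp

section CompositionOperator

variable {α β E : Type*} [MeasurableSpace α] [MeasurableSpace β] [NormedAddCommGroup E]
  {μ : Measure α} {ν : Measure β} {T : α → β} {p : ℝ≥0∞}

theorem eLpNorm_comp_le_of_map_le {K : ℝ≥0∞} (hp : p ≠ ⊤) (hT : AEMeasurable T μ)
    (hμν : μ.map T ≤ K • ν) {f : β → E} (hf : AEStronglyMeasurable f (μ.map T)) :
    eLpNorm (f ∘ T) p μ ≤ K ^ (1 / p).toReal * eLpNorm f p ν := by
  rw [← eLpNorm_map_measure hf hT, ← smul_eq_mul, ← eLpNorm_smul_measure_of_ne_top hp]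
  exact eLpNorm_mono_measure f hμν

theorem map_le_smul_of_eLpNorm_comp_le [MeasurableSpace E] [Nontrivial E] {C : ℝ≥0∞}
    (hp0 : p ≠ 0) (hp : p ≠ ⊤) (hT : Measurable T)
    (h : ∀ f : β → E, Measurable f → eLpNorm (f ∘ T) p μ ≤ C * eLpNorm f p ν) :
    μ.map T ≤ C ^ p.toReal • ν := by
  obtain ⟨e, he⟩ := exists_ne (0 : E)
  have hp_pos : 0 < p.toReal := ENNReal.toReal_pos hp0 hp
  refine Measure.le_iff.2 fun s hs => ?_
  have hcomp : (s.indicator fun _ => e) ∘ T = (T ⁻¹' s).indicator fun _ => e := rfl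
  have h_ind := h (s.indicator fun _ => e) (measurable_const.indicator hs)
  rw [hcomp, eLpNorm_indicator_const (hT hs) hp0 hp, eLpNorm_indicator_const hs hp0 hp,
    mul_left_comm, ENNReal.mul_le_mul_iff_right (enorm_ne_zero.2 he) enorm_ne_top, one_div,
    ENNReal.rpow_inv_le_iff hp_pos, ENNReal.mul_rpow_of_nonneg _ _ hp_pos.le,
    ENNReal.rpow_inv_rpow hp_pos.ne'] at h_ind
  simpa [Measure.map_apply hT hs] using h_ind

end CompositionOperator

theorem map_withDensity_linearEquiv {E : Type*} [NormedAddCommGroup E] [NormedSpace ℝ E]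
    [FiniteDimensional ℝ E] [MeasurableSpace E] [BorelSpace E] (μ : Measure E)
    [μ.IsAddHaarMeasure] (A : E ≃ₗ[ℝ] E) (ρ : E → ℝ≥0∞) :
    (μ.withDensity ρ).map A
      = ENNReal.ofReal |LinearMap.det (A : E →ₗ[ℝ] E)|⁻¹ • μ.withDensity (ρ ∘ A.symm) := by
  let e : E ≃ᵐ E := A.toContinuousLinearEquiv.toHomeomorph.toMeasurableEquiv
  have he : ⇑e = A := rfl
  have he_symm : ⇑e.symm = A.symm := rfl
  have hmap :=
    Measure.map_linearMap_addHaar_eq_smul_addHaar μ (LinearEquiv.isUnit_det' A).ne_zero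
  rw [LinearEquiv.coe_coe] at hmap
  rw [← he, e.map_withDensity, he, he_symm, hmap, abs_inv, withDensity_smul_measure]

section Gaussian

variable {n : ℕ}

noncomputable def gaussianProfile (n : ℕ) (r : ℝ) : ℝ :=
  (2 * Real.pi) ^ (-(n : ℝ) / 2) * Real.exp (-r ^ 2 / 2)

theorem gaussianMeasure_eq_withDensity (n : ℕ) :
    gaussianMeasure n = volume.withDensity fun x => ENNReal.ofReal (gaussianProfile n ‖x‖) :=
  rfl

theorem gaussianProfile_pos (n : ℕ) (r : ℝ) : 0 < gaussianProfile n r := by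
  unfold gaussianProfile; positivity

theorem continuous_gaussianProfile (n : ℕ) : Continuous (gaussianProfile n) := by
  unfold gaussianProfile; fun_prop

theorem gaussianProfile_antitoneOn (n : ℕ) : AntitoneOn (gaussianProfile n) (Ici 0) := by
  intro r hr s _ hrs
  unfold gaussianProfile
  gcongr

theorem gaussianMeasure_le_smul_volume (n : ℕ) :
    gaussianMeasure n ≤ ENNReal.ofReal (gaussianProfile n 0) • volume := by
  rw [gaussianMeasure_eq_withDensity, ← withDensity_const]
  refine withDensity_mono (ae_of_all _ fun x => ENNReal.ofReal_le_ofReal ?_)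
  exact gaussianProfile_antitoneOn n self_mem_Ici (norm_nonneg x) (norm_nonneg x)

theorem ofReal_gaussianProfile_mul_volume_le {s : Set (EuclideanSpace ℝ (Fin n))} {t : ℝ}
    (hs : MeasurableSet s) (hst : s ⊆ Metric.closedBall 0 t) :
    ENNReal.ofReal (gaussianProfile n t) * volume s ≤ gaussianMeasure n s := by
  rw [gaussianMeasure_eq_withDensity, withDensity_apply _ hs, ← setLIntegral_const]
  have hρ :
      Measurable fun x : EuclideanSpace ℝ (Fin n) => ENNReal.ofReal (gaussianProfile n ‖x‖) :=
    ((continuous_gaussianProfile n).measurable.comp measurable_norm).ennreal_ofReal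
  refine setLIntegral_mono hρ fun x hx => ENNReal.ofReal_le_ofReal ?_
  have hxt : ‖x‖ ≤ t := mem_closedBall_zero_iff.1 (hst hx)
  exact gaussianProfile_antitoneOn n (norm_nonneg x) ((norm_nonneg x).trans hxt) hxt

variable (A : EuclideanSpace ℝ (Fin n) ≃ₗ[ℝ] EuclideanSpace ℝ (Fin n))

theorem map_gaussianMeasure_le (hA : ∀ x, ‖A x‖ ≤ ‖x‖) :
    (gaussianMeasure n).map A
      ≤ ENNReal.ofReal |LinearMap.det (A : EuclideanSpace ℝ (Fin n) →ₗ[ℝ]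
          EuclideanSpace ℝ (Fin n))|⁻¹ • gaussianMeasure n := by
  rw [gaussianMeasure_eq_withDensity, map_withDensity_linearEquiv]
  gcongr
  refine withDensity_mono (ae_of_all _ fun y => ENNReal.ofReal_le_ofReal ?_)
  have hy : ‖y‖ ≤ ‖A.symm y‖ := by simpa using hA (A.symm y)
  exact gaussianProfile_antitoneOn n (norm_nonneg y) (norm_nonneg _) hy

theorem ofReal_gaussianProfile_le_of_map_gaussianMeasure_le {K : ℝ≥0∞}
    (h : (gaussianMeasure n).map A ≤ K • gaussianMeasure n) {t : ℝ} (ht : 0 < t) :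
    ENNReal.ofReal (gaussianProfile n t)
      ≤ K * ENNReal.ofReal |LinearMap.det (A : EuclideanSpace ℝ (Fin n) →ₗ[ℝ]
          EuclideanSpace ℝ (Fin n))| * ENNReal.ofReal (gaussianProfile n 0) := by
  set B := Metric.ball (0 : EuclideanSpace ℝ (Fin n)) t
  have hA_meas : Measurable A := A.toContinuousLinearEquiv.continuous.measurable
  have hAB : MeasurableSet (A '' B) :=
    (A.toContinuousLinearEquiv.isOpenMap _ Metric.isOpen_ball).measurableSet
  have hvol := Measure.addHaar_image_linearMap volume
    (A : EuclideanSpace ℝ (Fin n) →ₗ[ℝ] EuclideanSpace ℝ (Fin n)) B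
  rw [LinearEquiv.coe_coe] at hvol
  have hB := calc
    ENNReal.ofReal (gaussianProfile n t) * volume B ≤ gaussianMeasure n B :=
      ofReal_gaussianProfile_mul_volume_le measurableSet_ball Metric.ball_subset_closedBall
    _ = (gaussianMeasure n).map A (A '' B) := by
      rw [Measure.map_apply hA_meas hAB, A.injective.preimage_image]
    _ ≤ K * gaussianMeasure n (A '' B) := h _
    _ ≤ K * (ENNReal.ofReal (gaussianProfile n 0) * volume (A '' B)) := by
      gcongr; exact gaussianMeasure_le_smul_volume n _
    _ = K * ENNReal.ofReal |LinearMap.det (A : EuclideanSpace ℝ (Fin n) →ₗ[ℝ]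
          EuclideanSpace ℝ (Fin n))| * ENNReal.ofReal (gaussianProfile n 0) * volume B := by
      rw [hvol]; ring
  exact (ENNReal.mul_le_mul_iff_left (Metric.measure_ball_pos volume 0 ht).ne'
    measure_ball_lt_top.ne).1 hB

theorem ofReal_abs_det_inv_le_of_map_gaussianMeasure_le {K : ℝ≥0∞}
    (h : (gaussianMeasure n).map A ≤ K • gaussianMeasure n) :
    ENNReal.ofReal |LinearMap.det (A : EuclideanSpace ℝ (Fin n) →ₗ[ℝ]
      EuclideanSpace ℝ (Fin n))|⁻¹ ≤ K := by
  set d := LinearMap.det (A : EuclideanSpace ℝ (Fin n) →ₗ[ℝ] EuclideanSpace ℝ (Fin n))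
  have hd : 0 < ENNReal.ofReal |d| :=
    ENNReal.ofReal_pos.2 (abs_pos.2 (LinearEquiv.isUnit_det' A).ne_zero)
  have hlim : Tendsto (fun t => ENNReal.ofReal (gaussianProfile n t)) (𝓝[>] 0)
      (𝓝 (ENNReal.ofReal (gaussianProfile n 0))) :=
    ((ENNReal.continuous_ofReal.comp (continuous_gaussianProfile n)).tendsto 0).mono_left
      nhdsWithin_le_nhds
  have h_at_zero : 1 * ENNReal.ofReal (gaussianProfile n 0)
      ≤ K * ENNReal.ofReal |d| * ENNReal.ofReal (gaussianProfile n 0) := by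
    rw [one_mul]
    exact le_of_tendsto hlim (eventually_nhdsWithin_of_forall fun t ht =>
      ofReal_gaussianProfile_le_of_map_gaussianMeasure_le A h ht)
  have h_one : 1 ≤ K * ENNReal.ofReal |d| :=
    (ENNReal.mul_le_mul_iff_left (ENNReal.ofReal_pos.2 (gaussianProfile_pos n 0)).ne'
      ENNReal.ofReal_ne_top).1 h_at_zero
  rw [ENNReal.ofReal_inv_of_pos (ENNReal.ofReal_pos.1 hd),
    ENNReal.inv_le_iff_le_mul (fun _ => hd.ne') (fun h => absurd h ENNReal.ofReal_ne_top),
    mul_comm]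
  exact h_one

end Gaussian

/-- Let `μₙ` be the standard Gaussian measure on `ℝⁿ` and `A` an invertible
linear transformation with operator norm `‖A‖ ≤ 1`. Then the composition operator
`C_A f = f ∘ A` is bounded on `L²(μₙ)` with `‖C_A‖² = |det A|⁻¹`: the norm inequality
holds with constant `(|det A|⁻¹)^{1/2}` and the optimal constant squared is `|det A|⁻¹`. -/
theorem stmt_6 {n : ℕ}
    (A : EuclideanSpace ℝ (Fin n) ≃ₗ[ℝ] EuclideanSpace ℝ (Fin n))
    (hA : ‖LinearMap.toContinuousLinearMap
      (A : EuclideanSpace ℝ (Fin n) →ₗ[ℝ] EuclideanSpace ℝ (Fin n))‖ ≤ 1) :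
    (∀ f : EuclideanSpace ℝ (Fin n) → ℂ, Measurable f →
        eLpNorm (f ∘ A) 2 (gaussianMeasure n)
          ≤ (ENNReal.ofReal |LinearMap.det (A : EuclideanSpace ℝ (Fin n) →ₗ[ℝ]
              EuclideanSpace ℝ (Fin n))|⁻¹) ^ ((1 : ℝ) / 2)
            * eLpNorm f 2 (gaussianMeasure n)) ∧
      sInf {C : ℝ≥0∞ | ∀ f : EuclideanSpace ℝ (Fin n) → ℂ, Measurable f →
          eLpNorm (f ∘ A) 2 (gaussianMeasure n) ≤ C * eLpNorm f 2 (gaussianMeasure n)} ^ 2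
        = ENNReal.ofReal |LinearMap.det (A : EuclideanSpace ℝ (Fin n) →ₗ[ℝ]
            EuclideanSpace ℝ (Fin n))|⁻¹ := by
  set D := ENNReal.ofReal |LinearMap.det (A : EuclideanSpace ℝ (Fin n) →ₗ[ℝ]
    EuclideanSpace ℝ (Fin n))|⁻¹
  have hA_contracts (x) : ‖A x‖ ≤ ‖x‖ := by
    simpa using ContinuousLinearMap.le_of_opNorm_le _ hA x
  have hA_meas : Measurable A := A.toContinuousLinearEquiv.continuous.measurable
  have hbound : ∀ f : EuclideanSpace ℝ (Fin n) → ℂ, Measurable f →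
      eLpNorm (f ∘ A) 2 (gaussianMeasure n)
        ≤ D ^ ((1 : ℝ) / 2) * eLpNorm f 2 (gaussianMeasure n) :=
    fun f hf => by
      simpa using eLpNorm_comp_le_of_map_le (p := 2) ENNReal.ofNat_ne_top hA_meas.aemeasurable
        (map_gaussianMeasure_le A hA_contracts) hf.aestronglyMeasurable
  refine ⟨hbound, ?_⟩
  set S := {C : ℝ≥0∞ | ∀ f : EuclideanSpace ℝ (Fin n) → ℂ, Measurable f →
      eLpNorm (f ∘ A) 2 (gaussianMeasure n) ≤ C * eLpNorm f 2 (gaussianMeasure n)}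
  have hoptimal (C) (hC : C ∈ S) : D ^ ((1 : ℝ) / 2) ≤ C := by
    rw [one_div, ENNReal.rpow_inv_le_iff two_pos]
    simpa using ofReal_abs_det_inv_le_of_map_gaussianMeasure_le A
      (map_le_smul_of_eLpNorm_comp_le two_ne_zero ENNReal.ofNat_ne_top hA_meas hC)
  have hsInf : sInf S = D ^ ((1 : ℝ) / 2) := le_antisymm (sInf_le hbound) (le_sInf hoptimal)
  rw [hsInf, ← ENNReal.rpow_natCast, ← ENNReal.rpow_mul]
  norm_num
end

section
/- Let μₖ be a σ-finite measure on (X_k, 𝒜_k), let (X, 𝒜, μ) be a measure space, and let δᵏ : X → X_k be a measurable surjection such that μ∘(δᵏ)⁻¹ ≪ μₖ with bounded Radon–Nikodym derivative. If the map Δₖ : L²(μₖ) → L²(μ), f ↦ f∘δᵏ, is an isometry, then d(μ∘(δᵏ)⁻¹)/dμₖ = 1 μₖ-almost everywhere, and consequently Δₖ : L^p(μₖ) → L^p(μ), f ↦ f∘δᵏ, is an isometry for every 1 ≤ p < ∞. -/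
open MeasureTheory

open scoped ENNReal

namespace MeasureTheory.Measure

/-- Testing against indicators `𝟙_s • c` recovers `μ (δ ⁻¹' s) = ν s`. -/
theorem map_eq_of_eLpNorm_comp_eq {X Y E : Type*} [MeasurableSpace X] [MeasurableSpace Y]
    [NormedAddCommGroup E] [MeasurableSpace E] [Nontrivial E]
    {μ : Measure X} {ν : Measure Y} {δ : X → Y} {p : ℝ≥0∞} (hp0 : p ≠ 0) (hp : p ≠ ∞)
    (hδ : Measurable δ)
    (hnorm : ∀ f : Y → E, Measurable f → eLpNorm (f ∘ δ) p μ = eLpNorm f p ν) :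
    μ.map δ = ν := by
  ext s hs
  obtain ⟨c, hc⟩ := exists_ne (0 : E)
  have hind := hnorm (s.indicator fun _ => c) (measurable_const.indicator hs)
  have hcomp : (s.indicator fun _ => c) ∘ δ = (δ ⁻¹' s).indicator fun _ => c :=
    funext fun x => (Set.indicator_comp_right (g := fun _ => c) δ).symm
  rw [hcomp, eLpNorm_indicator_const (hδ hs) hp0 hp, eLpNorm_indicator_const hs hp0 hp,
    ENNReal.mul_right_inj (enorm_ne_zero.2 hc) enorm_ne_top] at hind
  rw [map_apply hδ hs]
  exact ENNReal.rpow_left_injective (one_div_ne_zero (ENNReal.toReal_ne_zero.2 ⟨hp0, hp⟩)) hind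

end MeasureTheory.Measure

theorem stmt_10_general {X Xk : Type*} [MeasurableSpace X] [MeasurableSpace Xk]
    (μ : Measure X) (μk : Measure Xk) [SigmaFinite μk]
    (δ : X → Xk) (hδ : Measurable δ)
    (h : Xk → ℝ≥0∞) (hh : Measurable h) (hd : μ.map δ = μk.withDensity h)
    (hisom : ∀ f : Xk → ℂ, Measurable f → eLpNorm (f ∘ δ) 2 μ = eLpNorm f 2 μk) :
    h =ᵐ[μk] 1 ∧
      ∀ p : ℝ≥0∞, 1 ≤ p → p ≠ ∞ → ∀ f : Xk → ℂ, Measurable f →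
        eLpNorm (f ∘ δ) p μ = eLpNorm f p μk := by
  have hmap : μ.map δ = μk :=
    Measure.map_eq_of_eLpNorm_comp_eq two_ne_zero ENNReal.ofNat_ne_top hδ hisom
  refine ⟨?_, fun p _ _ f hf => ?_⟩
  · refine (withDensity_eq_iff_of_sigmaFinite (g := 1) hh.aemeasurable aemeasurable_one).1 ?_
    rw [withDensity_one, ← hd, hmap]
  · rw [← hmap]
    exact (eLpNorm_map_measure (hmap ▸ hf.aestronglyMeasurable) hδ.aemeasurable).symm

/-- Let `μₖ` be σ-finite on `Xₖ`, `(X, 𝒜, μ)` a measure space and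
`δ : X → Xₖ` a measurable surjection with `μ∘δ⁻¹ ≪ μₖ` with bounded Radon–Nikodym
derivative `h` (i.e. `μ.map δ = μₖ.withDensity h` with `h` essentially bounded). If
`Δₖ : L²(μₖ) → L²(μ)`, `f ↦ f∘δ`, is an isometry, then `h = 1` a.e. `[μₖ]` and
consequently `f ↦ f∘δ` is an isometry from `L^p(μₖ)` to `L^p(μ)` for every `1 ≤ p < ∞`. -/
theorem stmt_10 {X Xk : Type*} [MeasurableSpace X] [MeasurableSpace Xk]
    (μ : Measure X) (μk : Measure Xk) [SigmaFinite μk]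
    (δ : X → Xk) (hδ : Measurable δ) (hsurj : Function.Surjective δ)
    (h : Xk → ℝ≥0∞) (hh : Measurable h) (hd : μ.map δ = μk.withDensity h)
    (hbdd : essSup h μk < ∞)
    (hisom : ∀ f : Xk → ℂ, Measurable f → eLpNorm (f ∘ δ) 2 μ = eLpNorm f 2 μk) :
    h =ᵐ[μk] 1 ∧
      ∀ p : ℝ≥0∞, 1 ≤ p → p ≠ ∞ → ∀ f : Xk → ℂ, Measurable f →
        eLpNorm (f ∘ δ) p μ = eLpNorm f p μk :=
  stmt_10_general μ μk δ hδ h hh hd hisom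
end

section
/- Let ρ : ℝ → (0,∞) be an even function whose restriction to [0,∞) is decreasing, and suppose there are M > 0 and α ≥ 1 such that ρ(x+ε)/ρ(x) ≤ α for all x ∈ ℝ and 0 ≤ ε ≤ M. Let p : ℝ → [0,M] be any measurable function and define B : ℝ² → ℝ², B(x₁,x₂) = (x₁, x₂ + p(x₁)), with inverse A. Then for the measure μ = (ρ₁ dλ)⊗(ρ dλ) on ℝ² (ρ₁ any positive density), μ∘A⁻¹ ≪ μ and the Radon–Nikodym derivative satisfies d(μ∘A⁻¹)/dμ (x₁,x₂) = ρ(x₂ + p(x₁))/ρ(x₂) ≤ α almost everywhere; hence C_A is bounded on L²(μ) with ‖C_A‖² ≤ α. -/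
open MeasureTheory

open scoped ENNReal

/-!
The shear `A(x₁, x₂) = (x₁, x₂ - p(x₁))` preserves `ρ₁λ ⊗ λ`, since on each fibre it is a
translation of Lebesgue measure. Hence it pushes `μ = ρ₁λ ⊗ ρλ` to `ρ₁λ ⊗ λ` with density
`ρ ∘ A⁻¹ = ρ(x₂ + p(x₁))`, i.e. to `μ` with density `ρ(x₂ + p(x₁)) / ρ(x₂) ≤ α`. So `μ ∘ A⁻¹ ≤ α μ`,
and the `L²` bound for `f ∘ A` follows by pushing the integral of `|f ∘ A|²` forward along `A`.
-/

namespace MeasureTheory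

variable {α β : Type*} [MeasurableSpace α] [MeasurableSpace β]

theorem MeasurePreserving.map_withDensity {μ : Measure α} {ν : Measure β} {A : α → β}
    {B : β → α} (hA : MeasurePreserving A μ ν) (hB : Measurable B) (hBA : Function.LeftInverse B A)
    {f : α → ℝ≥0∞} (hf : Measurable f) :
    (μ.withDensity f).map A = ν.withDensity (f ∘ B) := by
  refine Measure.ext_of_lintegral _ fun φ hφ => ?_
  rw [lintegral_map hφ hA.measurable, lintegral_withDensity_eq_lintegral_mul _ hf
      (g := fun a => φ (A a)) (hφ.comp hA.measurable),
    lintegral_withDensity_eq_lintegral_mul _ (hf.comp hB) hφ,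
    ← hA.lintegral_comp ((hf.comp hB).mul hφ)]
  simp only [Pi.mul_apply, Function.comp_apply, hBA _]

theorem eLpNorm_comp_le_of_map_le_smul {ε : Type*} [TopologicalSpace ε] [ContinuousENorm ε]
    {μ : Measure α} {ν : Measure β} {A : α → β} {f : β → ε} {c p : ℝ≥0∞}
    (hA : AEMeasurable A μ) (hf : AEStronglyMeasurable f (μ.map A)) (hle : μ.map A ≤ c • ν)
    (hp : p ≠ ∞) :
    eLpNorm (f ∘ A) p μ ≤ c ^ (1 / p).toReal * eLpNorm f p ν := by
  rw [← eLpNorm_map_measure hf hA, ← smul_eq_mul, ← eLpNorm_smul_measure_of_ne_top hp]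
  exact eLpNorm_mono_measure f hle

variable {G : Type*} [MeasurableSpace G] [AddGroup G] [MeasurableAdd₂ G] [MeasurableNeg G]
  (μ : Measure α) [SFinite μ] (ν : Measure G) [SFinite ν] [ν.IsAddRightInvariant]
  {p : α → G} (hp : Measurable p)
include hp

theorem measurePreserving_prod_sub_shear :
    MeasurePreserving (fun q : α × G => (q.1, q.2 - p q.1)) (μ.prod ν) (μ.prod ν) :=
  (MeasurePreserving.id μ).skew_product (g := fun x y => y - p x) (by fun_prop)
    (ae_of_all _ fun x => map_sub_right_eq_self ν (p x))

theorem map_prod_sub_shear_withDensity {w : G → ℝ≥0∞} (hw : Measurable w) :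
    (μ.prod (ν.withDensity w)).map (fun q : α × G => (q.1, q.2 - p q.1))
      = (μ.prod ν).withDensity fun q => w (q.2 + p q.1) := by
  rw [prod_withDensity_right hw,
    (measurePreserving_prod_sub_shear μ ν hp).map_withDensity
      (B := fun q => (q.1, q.2 + p q.1)) (by fun_prop) (fun q => by simp) (by fun_prop)]
  rfl

theorem map_prod_sub_shear_withDensity_eq_withDensity_div {w : G → ℝ≥0∞} (hw : Measurable w)
    (hw₀ : ∀ y, w y ≠ 0) (hw_top : ∀ y, w y ≠ ∞) :
    (μ.prod (ν.withDensity w)).map (fun q : α × G => (q.1, q.2 - p q.1))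
      = (μ.prod (ν.withDensity w)).withDensity fun q => w (q.2 + p q.1) / w q.2 := by
  rw [map_prod_sub_shear_withDensity μ ν hp hw, prod_withDensity_right hw,
    ← withDensity_mul _ (by fun_prop) (by fun_prop)]
  congr 1
  funext q
  exact (ENNReal.mul_div_cancel (hw₀ q.2) (hw_top q.2)).symm

end MeasureTheory

theorem stmt_19_general (ρ ρ₁ : ℝ → ℝ) (hρ : Measurable ρ)
    (hρpos : ∀ x, 0 < ρ x)
    (M α : ℝ) (hα : 1 ≤ α)
    (hratio : ∀ x ε : ℝ, 0 ≤ ε → ε ≤ M → ρ (x + ε) ≤ α * ρ x)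
    (p : ℝ → ℝ) (hp : Measurable p) (hprange : ∀ x, p x ∈ Set.Icc (0 : ℝ) M)
    (μ : Measure (ℝ × ℝ))
    (hμ : μ = (volume.withDensity fun x => ENNReal.ofReal (ρ₁ x)).prod
      (volume.withDensity fun x => ENNReal.ofReal (ρ x))) :
    μ.map (fun q : ℝ × ℝ => (q.1, q.2 - p q.1)) ≪ μ ∧
      μ.map (fun q : ℝ × ℝ => (q.1, q.2 - p q.1))
        = μ.withDensity (fun q => ENNReal.ofReal (ρ (q.2 + p q.1) / ρ q.2)) ∧
      (∀ᵐ q ∂μ, ρ (q.2 + p q.1) / ρ q.2 ≤ α) ∧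
      ∀ f : ℝ × ℝ → ℂ, Measurable f →
        eLpNorm (f ∘ fun q : ℝ × ℝ => (q.1, q.2 - p q.1)) 2 μ
          ≤ ENNReal.ofReal (Real.sqrt α) * eLpNorm f 2 μ := by
  have hmap : μ.map (fun q : ℝ × ℝ => (q.1, q.2 - p q.1))
      = μ.withDensity (fun q => ENNReal.ofReal (ρ (q.2 + p q.1) / ρ q.2)) := by
    simp only [ENNReal.ofReal_div_of_pos (hρpos _)]
    exact hμ ▸ map_prod_sub_shear_withDensity_eq_withDensity_div _ volume hp hρ.ennreal_ofReal
      (fun y => ENNReal.ofReal_pos.2 (hρpos y) |>.ne') (fun _ => ENNReal.ofReal_ne_top)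
  have hbound (q : ℝ × ℝ) : ρ (q.2 + p q.1) / ρ q.2 ≤ α :=
    (div_le_iff₀ (hρpos q.2)).2 (hratio q.2 (p q.1) (hprange q.1).1 (hprange q.1).2)
  have hle : μ.map (fun q : ℝ × ℝ => (q.1, q.2 - p q.1)) ≤ ENNReal.ofReal α • μ := by
    rw [hmap, ← withDensity_const]
    exact withDensity_mono (ae_of_all _ fun q => ENNReal.ofReal_le_ofReal (hbound q))
  refine ⟨hmap ▸ withDensity_absolutelyContinuous _ _, hmap, ae_of_all _ hbound, fun f hf => ?_⟩
  calc eLpNorm (f ∘ fun q : ℝ × ℝ => (q.1, q.2 - p q.1)) 2 μ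
      ≤ ENNReal.ofReal α ^ (1 / 2 : ℝ≥0∞).toReal * eLpNorm f 2 μ :=
        eLpNorm_comp_le_of_map_le_smul (by fun_prop) hf.aestronglyMeasurable hle (by simp)
    _ = ENNReal.ofReal (Real.sqrt α) * eLpNorm f 2 μ := by
        rw [Real.sqrt_eq_rpow, ENNReal.ofReal_rpow_of_nonneg (by linarith) (by norm_num)]
        norm_num

/-- Let `ρ : ℝ → (0,∞)` be even with `ρ|_{[0,∞)}` decreasing, and suppose
there are `M > 0`, `α ≥ 1` with `ρ(x+ε)/ρ(x) ≤ α` whenever `0 ≤ ε ≤ M`. Let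
`p : ℝ → [0,M]` be measurable and `B(x₁,x₂) = (x₁, x₂ + p(x₁))` with inverse
`A(x₁,x₂) = (x₁, x₂ − p(x₁))`. Then for `μ = (ρ₁ dλ) ⊗ (ρ dλ)` (`ρ₁` any positive density):
`μ∘A⁻¹ ≪ μ`, the Radon–Nikodym derivative is `(x₁,x₂) ↦ ρ(x₂ + p(x₁))/ρ(x₂) ≤ α` a.e.,
and `C_A` is bounded on `L²(μ)` with `‖C_A‖² ≤ α`. -/
theorem stmt_19 (ρ ρ₁ : ℝ → ℝ) (hρ : Measurable ρ) (hρ₁ : Measurable ρ₁)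
    (hρpos : ∀ x, 0 < ρ x) (hρ₁pos : ∀ x, 0 < ρ₁ x)
    (hρeven : ∀ x, ρ (-x) = ρ x) (hρanti : AntitoneOn ρ (Set.Ici (0 : ℝ)))
    (M α : ℝ) (hM : 0 < M) (hα : 1 ≤ α)
    (hratio : ∀ x ε : ℝ, 0 ≤ ε → ε ≤ M → ρ (x + ε) ≤ α * ρ x)
    (p : ℝ → ℝ) (hp : Measurable p) (hprange : ∀ x, p x ∈ Set.Icc (0 : ℝ) M)
    (μ : Measure (ℝ × ℝ))
    (hμ : μ = (volume.withDensity fun x => ENNReal.ofReal (ρ₁ x)).prod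
      (volume.withDensity fun x => ENNReal.ofReal (ρ x))) :
    μ.map (fun q : ℝ × ℝ => (q.1, q.2 - p q.1)) ≪ μ ∧
      μ.map (fun q : ℝ × ℝ => (q.1, q.2 - p q.1))
        = μ.withDensity (fun q => ENNReal.ofReal (ρ (q.2 + p q.1) / ρ q.2)) ∧
      (∀ᵐ q ∂μ, ρ (q.2 + p q.1) / ρ q.2 ≤ α) ∧
      ∀ f : ℝ × ℝ → ℂ, Measurable f →
        eLpNorm (f ∘ fun q : ℝ × ℝ => (q.1, q.2 - p q.1)) 2 μ
          ≤ ENNReal.ofReal (Real.sqrt α) * eLpNorm f 2 μ :=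
  stmt_19_general ρ ρ₁ hρ hρpos M α hα hratio p hp hprange μ hμ
end
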